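/- arXiv:1510.08570 — 2 statements merged into one kernel-verified Lean document; each statement's English description precedes it below -/
import Mathlib

section
/- For every τ ∈ (0,1), the penalized Fischer–Burmeister function φ_τ(a,b) := τ·((a + b) − √(a² + b²)) + (1 − τ)·max(a,0)·max(b,0) is an NCP-function: for all real a, b, one has φ_τ(a,b) = 0 if and only if a ≥ 0, b ≥ 0 and ab = 0. -/
/-!
Off the open positive quadrant `a₊ b₊ = 0`, so `φ_τ = τ φ_FB` and the claim is that `φ_FB` is an
NCP-function: `√(a² + b²) = a + b` forces `a + b ≥ 0` and `2ab = 0`. On the quadrant both terms of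
`φ_τ` are positive, since `√(a² + b²) < a + b` there.
-/

open Real

noncomputable def fischerBurmeister (a b : ℝ) : ℝ := (a + b) - √(a ^ 2 + b ^ 2)

theorem fischerBurmeister_eq_zero_iff (a b : ℝ) :
    fischerBurmeister a b = 0 ↔ 0 ≤ a ∧ 0 ≤ b ∧ a * b = 0 := by
  rw [fischerBurmeister, sub_eq_zero, eq_comm]
  constructor
  · intro h
    have hsum : 0 ≤ a + b := h ▸ sqrt_nonneg _
    have hab : a * b = 0 := by
      have hsq := sq_sqrt (by positivity : 0 ≤ a ^ 2 + b ^ 2)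
      rw [h] at hsq
      linear_combination hsq / 2
    rcases mul_eq_zero.mp hab with ha | hb
    · exact ⟨ha.ge, by linarith, hab⟩
    · exact ⟨by linarith, hb.ge, hab⟩
  · rintro ⟨ha, hb, hab⟩
    rw [show a ^ 2 + b ^ 2 = (a + b) ^ 2 by linear_combination -2 * hab, sqrt_sq (add_nonneg ha hb)]

theorem fischerBurmeister_pos {a b : ℝ} (ha : 0 < a) (hb : 0 < b) : 0 < fischerBurmeister a b := by
  have hlt : √(a ^ 2 + b ^ 2) < a + b := by
    rw [sqrt_lt' (by positivity)]
    nlinarith [mul_pos ha hb]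
  exact sub_pos.mpr hlt

theorem max_zero_mul_max_zero_eq_zero {a b : ℝ} (h : ¬(0 < a ∧ 0 < b)) :
    max a 0 * max b 0 = 0 := by
  rcases not_and_or.mp h with ha | hb
  · rw [max_eq_right (not_lt.mp ha), zero_mul]
  · rw [max_eq_right (not_lt.mp hb), mul_zero]

/-- For every `τ ∈ (0,1)`, the penalized Fischer–Burmeister function
is an NCP-function. -/
theorem stmt_4 (τ : ℝ) (hτ : τ ∈ Set.Ioo (0 : ℝ) 1) (a b : ℝ) :
    τ * ((a + b) - Real.sqrt (a ^ 2 + b ^ 2)) + (1 - τ) * (max a 0 * max b 0) = 0 ↔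
      0 ≤ a ∧ 0 ≤ b ∧ a * b = 0 := by
  obtain ⟨hτ0, hτ1⟩ := hτ
  change τ * fischerBurmeister a b + (1 - τ) * (max a 0 * max b 0) = 0 ↔ _
  by_cases hpos : 0 < a ∧ 0 < b
  · obtain ⟨ha, hb⟩ := hpos
    have hφ : 0 < τ * fischerBurmeister a b + (1 - τ) * (max a 0 * max b 0) := by
      rw [max_eq_left ha.le, max_eq_left hb.le]
      have hFB := fischerBurmeister_pos ha hb
      have hpenalty := sub_pos.mpr hτ1
      positivity
    exact iff_of_false hφ.ne' fun ⟨_, _, hab⟩ => (mul_pos ha hb).ne' hab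
  · rw [max_zero_mul_max_zero_eq_zero hpos, mul_zero, add_zero, mul_eq_zero,
      or_iff_right hτ0.ne', fischerBurmeister_eq_zero_iff]
end

section
/- Let τ ∈ (0,1). The penalized Fischer–Burmeister function φ_τ(a,b) := τ·((a + b) − √(a² + b²)) + (1 − τ)·max(a,0)·max(b,0) is differentiable at every point (a,b) ∈ ℝ² that does NOT satisfy the complementarity conditions, i.e. at every (a,b) such that it is not the case that a ≥ 0, b ≥ 0 and ab = 0. -/
/-- The penalized Fischer–Burmeister function on `ℝ × ℝ`. -/
noncomputable def phiTau (τ : ℝ) (p : ℝ × ℝ) : ℝ :=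
  τ * ((p.1 + p.2) - Real.sqrt (p.1 ^ 2 + p.2 ^ 2)) + (1 - τ) * (max p.1 0 * max p.2 0)

/-! Away from the origin the Fischer–Burmeister part is smooth, since `a² + b² > 0` there. The
penalty `a₊ b₊` is smooth off the complementarity set because near such a point either one
factor vanishes identically (some coordinate is negative) or both factors are the identity
(both coordinates are positive). -/

lemma differentiableAt_fischerBurmeister {p : ℝ × ℝ} (hp : p ≠ 0) :
    DifferentiableAt ℝ (fun q : ℝ × ℝ => (q.1 + q.2) - Real.sqrt (q.1 ^ 2 + q.2 ^ 2)) p := by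
  have hpos : 0 < p.1 ^ 2 + p.2 ^ 2 := by
    rcases p with ⟨a, b⟩
    have : a ≠ 0 ∨ b ≠ 0 := by
      contrapose! hp
      simp [hp.1, hp.2]
    rcases this with h | h <;> positivity
  exact (differentiableAt_fst.add differentiableAt_snd).sub
    (((differentiableAt_fst.pow 2).add (differentiableAt_snd.pow 2)).sqrt hpos.ne')

lemma neg_or_neg_or_pos_and_pos_of_not_complementary {a b : ℝ}
    (h : ¬ (0 ≤ a ∧ 0 ≤ b ∧ a * b = 0)) : a < 0 ∨ b < 0 ∨ (0 < a ∧ 0 < b) := by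
  by_contra! hc
  obtain ⟨ha, hb, hab⟩ := hc
  refine h ⟨ha, hb, ?_⟩
  rcases ha.eq_or_lt with rfl | ha'
  · exact zero_mul b
  · rw [le_antisymm (hab ha') hb, mul_zero]

lemma differentiableAt_max_fst_mul_max_snd {p : ℝ × ℝ}
    (hp : ¬ (0 ≤ p.1 ∧ 0 ≤ p.2 ∧ p.1 * p.2 = 0)) :
    DifferentiableAt ℝ (fun q : ℝ × ℝ => max q.1 0 * max q.2 0) p := by
  rcases neg_or_neg_or_pos_and_pos_of_not_complementary hp with h | h | ⟨h1, h2⟩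
  · refine (differentiableAt_const (0 : ℝ)).congr_of_eventuallyEq ?_
    filter_upwards [continuous_fst.continuousAt.eventually_lt continuousAt_const h] with q hq
    simp [max_eq_right hq.le]
  · refine (differentiableAt_const (0 : ℝ)).congr_of_eventuallyEq ?_
    filter_upwards [continuous_snd.continuousAt.eventually_lt continuousAt_const h] with q hq
    simp [max_eq_right hq.le]
  · refine (differentiableAt_fst.mul differentiableAt_snd).congr_of_eventuallyEq ?_
    filter_upwards [continuousAt_const.eventually_lt continuous_fst.continuousAt h1,
      continuousAt_const.eventually_lt continuous_snd.continuousAt h2] with q hq1 hq2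
    simp [max_eq_left hq1.le, max_eq_left hq2.le]

theorem stmt_11_general (τ : ℝ) (p : ℝ × ℝ)
    (hp : ¬ (0 ≤ p.1 ∧ 0 ≤ p.2 ∧ p.1 * p.2 = 0)) :
    DifferentiableAt ℝ (phiTau τ) p := by
  have hp0 : p ≠ 0 := by
    rintro rfl
    simp at hp
  exact ((differentiableAt_fischerBurmeister hp0).const_mul τ).add
    ((differentiableAt_max_fst_mul_max_snd hp).const_mul (1 - τ))

/-- for `τ ∈ (0,1)`, `φ_τ` is differentiable at every point `(a,b)` that
does not satisfy the complementarity conditions `a ≥ 0, b ≥ 0, ab = 0`. -/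
theorem stmt_11 (τ : ℝ) (hτ : τ ∈ Set.Ioo (0 : ℝ) 1) (p : ℝ × ℝ)
    (hp : ¬ (0 ≤ p.1 ∧ 0 ≤ p.2 ∧ p.1 * p.2 = 0)) :
    DifferentiableAt ℝ (phiTau τ) p :=
  stmt_11_general τ p hp
end
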